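/- arXiv:1908.00516 — 8 statements merged into one kernel-verified Lean document; each statement's English description precedes it below -/
import Mathlib

section
/- Every zerosumfree division semiring D that is not isomorphic to the Boolean semiring B = {0,1} is ideal-simple but not congruence-simple: the relation ρ identifying all nonzero elements (ρ = {(a,b) : a,b ∈ D∖{0}} ∪ {(0,0)}) is a congruence relation on D distinct from the diagonal and from D×D. -/
/-- The Boolean semiring `𝔹 = {0,1}` with `1 + 1 = 1` (i.e. `∨`/`∧` on `Bool`). -/
def BoolSemiring : Type := Bool

instance : Zero BoolSemiring := ⟨false⟩
instance : One BoolSemiring := ⟨true⟩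
instance : Add BoolSemiring := ⟨fun a b => (a || b : Bool)⟩
instance : Mul BoolSemiring := ⟨fun a b => (a && b : Bool)⟩
instance : DecidableEq BoolSemiring := inferInstanceAs (DecidableEq Bool)
instance : Fintype BoolSemiring := inferInstanceAs (Fintype Bool)

instance : CommSemiring BoolSemiring where
  add_assoc := by decide
  zero_add := by decide
  add_zero := by decide
  add_comm := by decide
  mul_assoc := by decide
  one_mul := by decide
  mul_one := by decide
  mul_comm := by decide
  zero_mul := by decide
  mul_zero := by decide
  left_distrib := by decide
  right_distrib := by decide
  nsmul := nsmulRec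

/-!
Every left ideal of a division semiring containing a nonzero `a` contains `a⁻¹ * a = 1`, hence
everything. In a zerosumfree semiring without zero divisors, `a ↦ [a ≠ 0]` is a surjective
semiring map onto the Boolean semiring `𝔹`, and `ρ` is its kernel congruence. That kernel is not
all of `D × D` since `0 ≠ 1` in `𝔹`, and if it were the diagonal the map would be an isomorphism
`D ≃+* 𝔹`.
-/
theorem Set.eq_singleton_zero_or_eq_univ_of_ideal {K : Type*} [DivisionSemiring K] (I : Set K)
    (h0 : 0 ∈ I) (hadd : ∀ a ∈ I, ∀ b ∈ I, a + b ∈ I) (hmul : ∀ s : K, ∀ a ∈ I, s * a ∈ I) :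
    I = {0} ∨ I = Set.univ :=
  let J : Ideal K :=
    { carrier := I, add_mem' := fun ha hb => hadd _ ha _ hb, zero_mem' := h0, smul_mem' := hmul }
  (Ideal.eq_bot_or_top J).imp (fun h => by simpa [J] using congrArg SetLike.coe h)
    (fun h => by simpa [J] using congrArg SetLike.coe h)

section NonzeroIndicator

variable {R : Type*} [Semiring R] [Nontrivial R] [NoZeroDivisors R]

open Classical in
noncomputable def nonzeroIndicator (hzs : ∀ a b : R, a + b = 0 → a = 0 ∧ b = 0) :
    R →+* BoolSemiring where
  toFun a := (decide (a ≠ 0) : Bool)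
  map_zero' := by simp; rfl
  map_one' := by simp; rfl
  map_add' a b := by
    show decide _ = (decide _ || decide _)
    have : a + b = 0 ↔ a = 0 ∧ b = 0 := ⟨hzs a b, fun h => by simp [h.1, h.2]⟩
    simp [this]
  map_mul' a b := by
    show decide _ = (decide _ && decide _)
    simp [not_or]

variable (hzs : ∀ a b : R, a + b = 0 → a = 0 ∧ b = 0)

theorem nonzeroIndicator_eq_iff {a b : R} :
    nonzeroIndicator hzs a = nonzeroIndicator hzs b ↔ (a = 0 ↔ b = 0) := by
  classical
  show (decide _ : Bool) = decide _ ↔ _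
  simp

theorem nonzeroIndicator_surjective : Function.Surjective (nonzeroIndicator hzs) := by
  intro b
  cases b
  exacts [⟨0, map_zero _⟩, ⟨1, map_one _⟩]

end NonzeroIndicator

/-- Every zerosumfree division semiring `D` not isomorphic to the Boolean semiring
is ideal-simple but not congruence-simple: the relation `ρ` identifying all nonzero
elements is a semiring congruence distinct from the diagonal and from `D × D`. -/
theorem zerosumfree_divisionSemiring_idealSimple_not_congruenceSimple
    {D : Type*} [DivisionSemiring D]
    (hzs : ∀ a b : D, a + b = 0 → a = 0 ∧ b = 0)
    (hnb : IsEmpty (D ≃+* BoolSemiring)) :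
    (∀ I : Set D,
        (0 ∈ I ∧ (∀ a ∈ I, ∀ b ∈ I, a + b ∈ I) ∧
          (∀ s : D, ∀ a ∈ I, s * a ∈ I ∧ a * s ∈ I)) →
        I = {0} ∨ I = Set.univ) ∧
    (let ρ : D → D → Prop := fun a b => (a ≠ 0 ∧ b ≠ 0) ∨ (a = 0 ∧ b = 0);
      Equivalence ρ ∧
        (∀ a b c d : D, ρ a b → ρ c d → ρ (a + c) (b + d)) ∧
        (∀ a b c d : D, ρ a b → ρ c d → ρ (a * c) (b * d)) ∧
        ρ ≠ (fun a b => a = b) ∧ ρ ≠ (fun _ _ => True)) := by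
  refine ⟨fun I ⟨h0, hadd, hmul⟩ =>
    Set.eq_singleton_zero_or_eq_univ_of_ideal I h0 hadd fun s a ha => (hmul s a ha).1, ?_⟩
  intro ρ
  set φ := nonzeroIndicator hzs
  have hρ : ρ = RingCon.ker φ := by
    funext a b
    rw [RingCon.ker_apply, nonzeroIndicator_eq_iff, eq_iff_iff]
    tauto
  rw [hρ]
  refine ⟨(RingCon.ker φ).iseqv, fun _ _ _ _ => (RingCon.ker φ).add,
    fun _ _ _ _ => (RingCon.ker φ).mul, fun h => ?_, fun h => ?_⟩
  · have hinj : Function.Injective φ := fun a b hab =>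
      (congrFun₂ h a b).mp ((RingCon.ker_apply φ).2 hab)
    exact hnb.false (RingEquiv.ofBijective φ ⟨hinj, nonzeroIndicator_surjective hzs⟩)
  · have h01 : φ 0 = φ 1 := (RingCon.ker_apply φ).1 ((congrFun₂ h 0 1).mpr trivial)
    rw [map_zero, map_one] at h01
    exact absurd h01 (by decide)
end

section
/- In the matrix semiring S = M₂(ℝ₊) over the nonnegative reals, the left ideals E₁ = {[[a,0],[b,0]] : a,b ∈ ℝ₊} and N = {[[a,c],[b,d]] : a ≤ c, b ≤ d, a,b,c,d ∈ ℝ₊} satisfy E₁ ∩ N = {0}, yet the sum E₁ + N is not direct (there exists an element with two distinct representations as a sum of an element of E₁ and an element of N). -/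
open scoped NNReal

/-- A subset of a semiring is a left ideal iff it contains `0` and is closed under
addition and left multiplication by arbitrary elements. -/
def IsLeftIdealSet {R : Type*} [Semiring R] (I : Set R) : Prop :=
  0 ∈ I ∧ (∀ a ∈ I, ∀ b ∈ I, a + b ∈ I) ∧ ∀ s : R, ∀ a ∈ I, s * a ∈ I

/-!
Column `j` of `S * A` is `S` applied to column `j` of `A`, so "column `j` vanishes" cuts out a
left ideal of `Mₙ(R)`, and so does "column `j` ≤ column `k`" once all entries of `S` are
nonnegative. In `M₂(ℝ₊)` a matrix in both ideals has second column `0` and first column below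
it, hence is `0`. But without subtraction a trivial intersection does not force uniqueness of
representations: `N` absorbs the nonzero element `e₁₁ ∈ E₁`, since `e₁₁ + e₁₂ ∈ N`, so
`e₁₁ + e₁₂ = 0 + (e₁₁ + e₁₂)` are two decompositions.
-/

theorem exists_add_eq_add_ne_of_add_mem {M : Type*} [AddZeroClass M] {K L : Set M}
    (hK : 0 ∈ K) {k l : M} (hk : k ∈ K) (hl : l ∈ L) (hkl : k + l ∈ L) (hk₀ : k ≠ 0) :
    ∃ k k' l l' : M, k ∈ K ∧ k' ∈ K ∧ l ∈ L ∧ l' ∈ L ∧ k + l = k' + l' ∧ ¬(k = k' ∧ l = l') :=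
  ⟨k, 0, l, k + l, hk, hK, hl, hkl, (zero_add _).symm, fun h => hk₀ h.1⟩

namespace Matrix

variable {n R : Type*} [Fintype n] [DecidableEq n]

theorem isLeftIdealSet_setOf_col_eq_zero [Semiring R] (j : n) :
    IsLeftIdealSet {A : Matrix n n R | ∀ i, A i j = 0} := by
  refine ⟨fun _ => rfl, fun a ha b hb i => by simp [ha i, hb i], fun s a ha i => ?_⟩
  simp only [mul_apply]
  exact Finset.sum_eq_zero fun l _ => by rw [ha l, mul_zero]

theorem isLeftIdealSet_setOf_col_le_col [Semiring R] [PartialOrder R] [IsOrderedRing R]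
    [CanonicallyOrderedAdd R] (j k : n) :
    IsLeftIdealSet {A : Matrix n n R | ∀ i, A i j ≤ A i k} := by
  refine ⟨fun _ => le_rfl, fun a ha b hb i => add_le_add (ha i) (hb i), fun s a ha i => ?_⟩
  simp only [mul_apply]
  exact Finset.sum_le_sum fun l _ => mul_le_mul_of_nonneg_left (ha l) zero_le

theorem setOf_col_eq_zero_inter_setOf_col_le_col [AddCommMonoid R] [PartialOrder R]
    [CanonicallyOrderedAdd R] :
    {A : Matrix (Fin 2) (Fin 2) R | ∀ i, A i 1 = 0} ∩ {A | ∀ i, A i 0 ≤ A i 1} = {0} := by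
  refine Set.eq_singleton_iff_unique_mem.mpr ⟨⟨fun _ => rfl, fun _ => le_rfl⟩, ?_⟩
  rintro A ⟨hcol₁, hle⟩
  ext i j
  fin_cases j
  · exact le_zero_iff.mp (hcol₁ i ▸ hle i)
  · exact hcol₁ i

end Matrix

/-- In `M₂(ℝ₊)`, the left ideals `E₁ = {[[a,0],[b,0]]}` and
`N = {[[a,c],[b,d]] : a ≤ c, b ≤ d}` intersect in `{0}`, yet their sum is not
direct: some element has two distinct representations. -/
theorem M2_NNReal_intersection_zero_sum_not_direct :
    let E₁ : Set (Matrix (Fin 2) (Fin 2) ℝ≥0) := {A | A 0 1 = 0 ∧ A 1 1 = 0}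
    let N : Set (Matrix (Fin 2) (Fin 2) ℝ≥0) := {A | A 0 0 ≤ A 0 1 ∧ A 1 0 ≤ A 1 1}
    IsLeftIdealSet E₁ ∧ IsLeftIdealSet N ∧ E₁ ∩ N = {0} ∧
      ∃ k k' l l' : Matrix (Fin 2) (Fin 2) ℝ≥0,
        k ∈ E₁ ∧ k' ∈ E₁ ∧ l ∈ N ∧ l' ∈ N ∧ k + l = k' + l' ∧ ¬(k = k' ∧ l = l') := by
  intro E₁ N
  have hE₁ : E₁ = {A | ∀ i, A i 1 = 0} := by simp [E₁, Fin.forall_fin_two]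
  have hN : N = {A | ∀ i, A i 0 ≤ A i 1} := by simp [N, Fin.forall_fin_two]
  rw [hE₁, hN]
  refine ⟨Matrix.isLeftIdealSet_setOf_col_eq_zero 1, Matrix.isLeftIdealSet_setOf_col_le_col 0 1,
    Matrix.setOf_col_eq_zero_inter_setOf_col_le_col, ?_⟩
  refine exists_add_eq_add_ne_of_add_mem (k := !![1, 0; 0, 0]) (l := !![0, 1; 0, 0])
    (fun _ => rfl) ?_ ?_ ?_ ?_ <;> simp [Fin.forall_fin_two, ← Matrix.ext_iff]
end

section
/- A left S-semimodule M satisfies the ascending chain condition on direct summands if and only if it satisfies the descending chain condition on direct summands. -/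
/-!
If `B ≤ A` are direct summands of `M`, complements can be chosen compatibly in both
directions: any complement `A'` of `A` lies in some complement of `B`, and any complement `C`
of `B` contains some complement of `A`. Hence a descending chain of summands admits an
ascending chain of complements, and an ascending chain of summands a descending chain of
complements, built one step at a time. Complements are summands as well, and two comparable
summands with a common complement are equal, so a chain of summands stabilizes as soon as the
chain of complements does.
-/

section DirectSumDefs

variable {S : Type*} [Semiring S] {M : Type*} [AddCommMonoid M] [Module S M]

/-- `N` is the internal direct sum of its subsemimodules `K` and `L`: every element
of `N` is uniquely a sum of an element of `K` and an element of `L`. -/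
def IsDirectSumOf (N K L : Submodule S M) : Prop :=
  K ≤ N ∧ L ≤ N ∧ (∀ m ∈ N, ∃ k ∈ K, ∃ l ∈ L, m = k + l) ∧
    ∀ k k' l l' : M, k ∈ K → k' ∈ K → l ∈ L → l' ∈ L → k + l = k' + l' →
      k = k' ∧ l = l'

/-- `N` is a direct summand of `M`, i.e. `M = N ⊕ N'` for some subsemimodule `N'`. -/
def IsDirectSummand (N : Submodule S M) : Prop :=
  ∃ N' : Submodule S M, IsDirectSumOf ⊤ N N'

end DirectSumDefs

theorem exists_seq_of_forall_exists_succ {α : Type*} {p : ℕ → α → Prop} {r : α → α → Prop}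
    (h₀ : ∃ a, p 0 a) (hstep : ∀ n a, p n a → ∃ b, p (n + 1) b ∧ r a b) :
    ∃ g : ℕ → α, (∀ n, p n (g n)) ∧ ∀ n, r (g n) (g (n + 1)) := by
  obtain ⟨a₀, ha₀⟩ := h₀
  choose! next hnext using hstep
  let g : ℕ → α := fun n => Nat.rec a₀ next n
  have hg : ∀ n, p n (g n) := fun n => by
    induction n with
    | zero => exact ha₀
    | succ n ih => exact (hnext n (g n) ih).1
  exact ⟨g, hg, fun n => (hnext n (g n) (hg n)).2⟩

namespace IsDirectSumOf

variable {S : Type*} [Semiring S] {M : Type*} [AddCommMonoid M] [Module S M]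
  {N A A' B C : Submodule S M}

theorem symm (h : IsDirectSumOf N A B) : IsDirectSumOf N B A := by
  obtain ⟨hA, hB, hsum, huniq⟩ := h
  refine ⟨hB, hA, fun m hm => ?_, fun b b' a a' hb hb' ha ha' e => ?_⟩
  · obtain ⟨a, ha, b, hb, rfl⟩ := hsum m hm
    exact ⟨b, hb, a, ha, add_comm a b⟩
  · rw [add_comm b, add_comm b'] at e
    exact (huniq a a' b b' ha ha' hb hb' e).symm

theorem isDirectSummand_right (h : IsDirectSumOf ⊤ A B) : IsDirectSummand B :=
  ⟨A, h.symm⟩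

theorem exists_add (h : IsDirectSumOf ⊤ A B) (m : M) : ∃ a ∈ A, ∃ b ∈ B, m = a + b :=
  h.2.2.1 m Submodule.mem_top

theorem add_inj (h : IsDirectSumOf N A B) {a a' b b' : M} (ha : a ∈ A) (ha' : a' ∈ A)
    (hb : b ∈ B) (hb' : b' ∈ B) (e : a + b = a' + b') : a = a' ∧ b = b' :=
  h.2.2.2 a a' b b' ha ha' hb hb' e

/-- Direct summands are subtractive. -/
theorem mem_of_add_mem (h : IsDirectSumOf ⊤ A B) {x y : M} (hx : x ∈ A) (hxy : x + y ∈ A) :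
    y ∈ A := by
  obtain ⟨a, ha, b, hb, rfl⟩ := h.exists_add y
  have hb0 : 0 = b := (h.add_inj hxy (add_mem hx ha) B.zero_mem hb (by rw [add_zero, add_assoc])).2
  rwa [← hb0, add_zero]

theorem eq_of_le (h : IsDirectSumOf N A C) (h' : IsDirectSumOf N B C) (hAB : A ≤ B) :
    A = B := by
  refine le_antisymm hAB fun x hx => ?_
  obtain ⟨a, ha, c, hc, rfl⟩ := h.2.2.1 x (h'.1 hx)
  rwa [(h'.add_inj hx (hAB ha) C.zero_mem hc (add_zero _)).1]

/-- A complement `A'` of `A ≥ B` extends to the complement `(A ⊓ C) ⊔ A'` of `B`. -/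
theorem exists_ge_of_le (hA : IsDirectSumOf ⊤ A A') (hB : IsDirectSumOf ⊤ B C) (hBA : B ≤ A) :
    ∃ D, IsDirectSumOf ⊤ B D ∧ A' ≤ D := by
  refine ⟨A ⊓ C ⊔ A', ⟨le_top, le_top, fun m _ => ?_, ?_⟩, le_sup_right⟩
  · obtain ⟨a, ha, a', ha', rfl⟩ := hA.exists_add m
    obtain ⟨b, hb, c, hc, rfl⟩ := hB.exists_add a
    have hcA : c ∈ A := hA.mem_of_add_mem (hBA hb) ha
    exact ⟨b, hb, c + a', Submodule.add_mem_sup ⟨hcA, hc⟩ ha', add_assoc b c a'⟩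
  · intro b b₂ d d₂ hb hb₂ hd hd₂ e
    obtain ⟨c, ⟨hcA, hcC⟩, a', ha', rfl⟩ := Submodule.mem_sup.1 hd
    obtain ⟨c₂, ⟨hc₂A, hc₂C⟩, a₂', ha₂', rfl⟩ := Submodule.mem_sup.1 hd₂
    obtain ⟨hbc, rfl⟩ :=
      hA.add_inj (add_mem (hBA hb) hcA) (add_mem (hBA hb₂) hc₂A) ha' ha₂'
        (by simpa only [add_assoc] using e)
    obtain ⟨rfl, rfl⟩ := hB.add_inj hb hb₂ hcC hc₂C hbc
    exact ⟨rfl, rfl⟩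

/-- When `M = B ⊕ C`, this is the image of `A'` under the projection onto `C` along `B`. -/
def projectionAlong (B C A' : Submodule S M) : Submodule S M where
  carrier := {c | c ∈ C ∧ ∃ b ∈ B, b + c ∈ A'}
  add_mem' := by
    rintro c c₂ ⟨hc, b, hb, hbc⟩ ⟨hc₂, b₂, hb₂, hbc₂⟩
    refine ⟨add_mem hc hc₂, b + b₂, add_mem hb hb₂, ?_⟩
    rw [add_add_add_comm]
    exact add_mem hbc hbc₂
  zero_mem' := ⟨C.zero_mem, 0, B.zero_mem, by simpa only [add_zero] using A'.zero_mem⟩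
  smul_mem' := by
    rintro s c ⟨hc, b, hb, hbc⟩
    refine ⟨C.smul_mem s hc, s • b, B.smul_mem s hb, ?_⟩
    simpa only [smul_add] using A'.smul_mem s hbc

theorem exists_le_of_le (hA : IsDirectSumOf ⊤ A A') (hB : IsDirectSumOf ⊤ B C) (hBA : B ≤ A) :
    ∃ E, IsDirectSumOf ⊤ A E ∧ E ≤ C := by
  refine ⟨projectionAlong B C A', ⟨le_top, le_top, fun m _ => ?_, ?_⟩, fun c hc => hc.1⟩
  · obtain ⟨a, ha, a', ha', rfl⟩ := hA.exists_add m
    obtain ⟨b, hb, c, hc, rfl⟩ := hB.exists_add a'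
    exact ⟨a + b, add_mem ha (hBA hb), c, ⟨hc, b, hb, ha'⟩, (add_assoc a b c).symm⟩
  · rintro a a₂ c c₂ ha ha₂ ⟨hc, b, hb, hx⟩ ⟨hc₂, b₂, hb₂, hx₂⟩ e
    have e' : (a + b₂) + (b + c) = (a₂ + b) + (b₂ + c₂) := by
      calc (a + b₂) + (b + c) = (a + c) + (b + b₂) := by ac_rfl
        _ = (a₂ + c₂) + (b + b₂) := by rw [e]
        _ = (a₂ + b) + (b₂ + c₂) := by ac_rfl
    obtain ⟨-, hx_eq⟩ :=
      hA.add_inj (add_mem ha (hBA hb₂)) (add_mem ha₂ (hBA hb)) hx hx₂ e'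
    obtain ⟨rfl, rfl⟩ := hB.add_inj hb hb₂ hc hc₂ hx_eq
    -- adding `b` turns `c` into the element `b + c` of `A'`, where `A ⊕ A'` cancels it
    have e'' : a + (b + c) = a₂ + (b + c) := by rw [add_left_comm, e, add_left_comm]
    exact ⟨(hA.add_inj ha ha₂ hx hx e'').1, rfl⟩

end IsDirectSumOf

/-- A left `S`-semimodule `M` satisfies the ACC on direct summands if and only if
it satisfies the DCC on direct summands. -/
theorem acc_iff_dcc_on_direct_summands
    {S : Type*} [Semiring S] {M : Type*} [AddCommMonoid M] [Module S M] :
    (∀ f : ℕ → Submodule S M, (∀ n, IsDirectSummand (f n)) →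
        (∀ n, f n ≤ f (n + 1)) → ∃ n, ∀ m, n ≤ m → f m = f n) ↔
      (∀ f : ℕ → Submodule S M, (∀ n, IsDirectSummand (f n)) →
        (∀ n, f (n + 1) ≤ f n) → ∃ n, ∀ m, n ≤ m → f m = f n) := by
  constructor
  · intro hACC f hf hanti
    obtain ⟨g, hg, hgmono⟩ := exists_seq_of_forall_exists_succ
      (p := fun n C => IsDirectSumOf ⊤ (f n) C) (r := (· ≤ ·)) (hf 0) fun n _ hC =>
        have ⟨_, hC'⟩ := hf (n + 1)
        hC.exists_ge_of_le hC' (hanti n)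
    obtain ⟨n₀, hn₀⟩ := hACC g (fun n => (hg n).isDirectSummand_right) hgmono
    refine ⟨n₀, fun m hm => ?_⟩
    have hm' : IsDirectSumOf ⊤ (f m) (g n₀) := hn₀ m hm ▸ hg m
    exact hm'.eq_of_le (hg n₀) (antitone_nat_of_succ_le hanti hm)
  · intro hDCC f hf hmono
    obtain ⟨g, hg, hganti⟩ := exists_seq_of_forall_exists_succ
      (p := fun n C => IsDirectSumOf ⊤ (f n) C) (r := fun C D => D ≤ C) (hf 0) fun n _ hC =>
        have ⟨_, hA'⟩ := hf (n + 1)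
        hA'.exists_le_of_le hC (hmono n)
    obtain ⟨n₀, hn₀⟩ := hDCC g (fun n => (hg n).isDirectSummand_right) hganti
    refine ⟨n₀, fun m hm => ?_⟩
    have hm' : IsDirectSumOf ⊤ (f m) (g n₀) := hn₀ m hm ▸ hg m
    exact ((hg n₀).eq_of_le hm' (monotone_nat_of_le_succ hmono hm)).symm
end

section
/- Let M be a left S-semimodule and N a subtractive subsemimodule of M. If M = L ⊕ K for subsemimodules L ≤ N and K ≤ M, then N = L ⊕ (K ∩ N). -/
/-- A subsemimodule `N ≤ M` is subtractive iff `m + n = n'` with `n, n' ∈ N`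
implies `m ∈ N`. -/
def Submodule.IsSubtractive {S : Type*} [Semiring S] {M : Type*} [AddCommMonoid M]
    [Module S M] (N : Submodule S M) : Prop :=
  ∀ m n n' : M, n ∈ N → n' ∈ N → m + n = n' → m ∈ N

theorem Submodule.IsSubtractive.mem_of_add_mem_left {S : Type*} [Semiring S] {M : Type*}
    [AddCommMonoid M] [Module S M] {N : Submodule S M} (hN : N.IsSubtractive) {l k : M}
    (hl : l ∈ N) (hlk : l + k ∈ N) : k ∈ N :=
  hN k l (l + k) hl hlk (add_comm k l)

theorem IsDirectSumOf.inf_of_isSubtractive {S : Type*} [Semiring S] {M : Type*}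
    [AddCommMonoid M] [Module S M] {P N L K : Submodule S M} (h : IsDirectSumOf P L K)
    (hN : N.IsSubtractive) (hLN : L ≤ N) (hNP : N ≤ P) : IsDirectSumOf N L (K ⊓ N) := by
  obtain ⟨-, -, hsplit, hunique⟩ := h
  refine ⟨hLN, inf_le_right, fun m hm => ?_, fun l l' k k' hl hl' hk hk' =>
    hunique l l' k k' hl hl' hk.1 hk'.1⟩
  obtain ⟨l, hl, k, hk, rfl⟩ := hsplit m (hNP hm)
  exact ⟨l, hl, k, ⟨hk, hN.mem_of_add_mem_left (hLN hl) hm⟩, rfl⟩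

/-- If `N` is a subtractive subsemimodule of `M` and `M = L ⊕ K` with `L ≤ N`,
then `N = L ⊕ (K ∩ N)`. -/
theorem subtractive_inherits_decomposition
    {S : Type*} [Semiring S] {M : Type*} [AddCommMonoid M] [Module S M]
    (N L K : Submodule S M) (hN : N.IsSubtractive) (hLN : L ≤ N)
    (h : IsDirectSumOf ⊤ L K) : IsDirectSumOf N L (K ⊓ N) :=
  h.inf_of_isSubtractive hN hLN le_top
end

section
/- Let S be a commutative semiring that is a direct sum S = S₁ ⊕ ⋯ ⊕ Sₖ of ideal-simple ideals. Then every subtractive ideal I of S equals ⨁_{a∈A} S_a for some subset A ⊆ {1,…,k}; in particular, every subtractive ideal of S is a direct summand of S. -/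
open Function

namespace Ideal

variable {R : Type*} [CommSemiring R]

theorem eq_iSup_inf_of_iSup_eq_top {ι : Sort*} {P : ι → Ideal R} (h : ⨆ i, P i = ⊤)
    (I : Ideal R) : I = ⨆ i, I ⊓ P i :=
  le_antisymm
    (calc I = I * ⨆ i, P i := by rw [h, mul_top]
      _ = ⨆ i, I * P i := mul_iSup I P
      _ ≤ ⨆ i, I ⊓ P i := iSup_mono fun _ => mul_le_inf)
    (iSup_le fun _ => inf_le_left)

theorem exists_eq_biSup_of_iSup_eq_top {ι : Type*} [Fintype ι] {P : ι → Ideal R}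
    (h : ⨆ i, P i = ⊤) (hP : ∀ i, ∀ J ≤ P i, J = ⊥ ∨ J = P i) (I : Ideal R) :
    ∃ A : Finset ι, I = ⨆ i ∈ A, P i := by
  classical
  set A := Finset.univ.filter (P · ≤ I)
  refine ⟨A, le_antisymm ?_ (iSup₂_le fun i hi => (Finset.mem_filter.1 hi).2)⟩
  refine (eq_iSup_inf_of_iSup_eq_top h I).trans_le (iSup_le fun i => ?_)
  rcases hP i (I ⊓ P i) inf_le_right with hbot | hi
  · simp [hbot]
  · refine le_iSup₂_of_le (f := fun i (_ : i ∈ A) => P i) i ?_ inf_le_right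
    exact Finset.mem_filter.2 ⟨Finset.mem_univ i, hi ▸ inf_le_left⟩

theorem add_mul_eq_of_mul_eq_bot {K L : Ideal R} (hmul : K * L = ⊥) {u v x y : R} (hu : u ∈ K)
    (hv : v ∈ L) (huv : u + v = 1) (hx : x ∈ K) (hy : y ∈ L) : (x + y) * u = x := by
  have hKL : ∀ a ∈ K, ∀ b ∈ L, a * b = 0 := fun a ha b hb =>
    (Submodule.mem_bot R).1 (hmul ▸ mul_mem_mul ha hb)
  calc (x + y) * u = x * (u + v) := by
        rw [add_mul, mul_add, mul_comm y, hKL u hu y hy, hKL x hx v hv]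
    _ = x := by rw [huv, mul_one]

theorem isDirectSumOf_top_of_mul_eq_bot {K L : Ideal R} (hmul : K * L = ⊥) (hsup : K ⊔ L = ⊤) :
    IsDirectSumOf ⊤ K L := by
  obtain ⟨u, hu, v, hv, huv⟩ := Submodule.mem_sup.1 (hsup ▸ Submodule.mem_top : (1 : R) ∈ K ⊔ L)
  have hmul' : L * K = ⊥ := mul_comm L K ▸ hmul
  refine ⟨le_top, le_top, fun m _ => ⟨m * u, K.mul_mem_left m hu, m * v, L.mul_mem_left m hv, ?_⟩,
    fun x x' y y' hx hx' hy hy' h => ⟨?_, ?_⟩⟩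
  · rw [← mul_add, huv, mul_one]
  · rw [← add_mul_eq_of_mul_eq_bot hmul hu hv huv hx hy, h,
      add_mul_eq_of_mul_eq_bot hmul hu hv huv hx' hy']
  · rw [add_comm] at huv
    rw [← add_mul_eq_of_mul_eq_bot hmul' hv hu huv hy hx, add_comm, h, add_comm,
      add_mul_eq_of_mul_eq_bot hmul' hv hu huv hy' hx']

theorem biSup_mul_biSup_eq_bot {ι : Type*} {P : ι → Ideal R} (hP : Pairwise (Disjoint on P))
    {s t : Set ι} (hst : Disjoint s t) : (⨆ i ∈ s, P i) * (⨆ j ∈ t, P j) = ⊥ := by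
  simp only [iSup_mul, mul_iSup, iSup_eq_bot]
  intro j hj i hi
  exact eq_bot_iff.2 (mul_le_inf.trans (hP (hst.ne_of_mem hi hj)).le_bot)

theorem isDirectSummand_biSup {ι : Type*} [Fintype ι] [DecidableEq ι] {P : ι → Ideal R}
    (hP : iSupIndep P) (h : ⨆ i, P i = ⊤) (A : Finset ι) : IsDirectSummand (⨆ i ∈ A, P i) := by
  refine ⟨⨆ i ∈ Aᶜ, P i, isDirectSumOf_top_of_mul_eq_bot ?_ ?_⟩
  · exact biSup_mul_biSup_eq_bot hP.pairwiseDisjoint (Finset.disjoint_coe.2 disjoint_compl_right)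
  · rw [← Finset.iSup_union, Finset.union_compl]
    simpa using h

end Ideal

theorem subtractive_ideal_of_commutative_ideal_semisimple_general
    {S : Type*} [CommSemiring S] {k : ℕ} (Si : Fin k → Submodule S S)
    (hd : DirectSum.IsInternal Si)
    (hsimple : ∀ i, Si i ≠ ⊥ ∧ ∀ J : Submodule S S, J ≤ Si i → J = ⊥ ∨ J = Si i)
    (I : Submodule S S) :
    (∃ A : Finset (Fin k), I = ⨆ a ∈ A, Si a) ∧ IsDirectSummand I := by
  obtain ⟨A, rfl⟩ := Ideal.exists_eq_biSup_of_iSup_eq_top hd.submodule_iSup_eq_top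
    (fun i => (hsimple i).2) I
  exact ⟨⟨A, rfl⟩, Ideal.isDirectSummand_biSup hd.submodule_iSupIndep hd.submodule_iSup_eq_top A⟩

/-- Let `S` be a commutative semiring which is the internal direct sum
`S = S₁ ⊕ ⋯ ⊕ Sₖ` of ideal-simple ideals. Then every subtractive ideal `I` of `S`
equals `⨁_{a ∈ A} S_a` for some `A ⊆ {1,…,k}`; in particular every subtractive
ideal is a direct summand of `S`. -/
theorem subtractive_ideal_of_commutative_ideal_semisimple
    {S : Type*} [CommSemiring S] {k : ℕ} (Si : Fin k → Submodule S S)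
    (hd : DirectSum.IsInternal Si)
    (hsimple : ∀ i, Si i ≠ ⊥ ∧ ∀ J : Submodule S S, J ≤ Si i → J = ⊥ ∨ J = Si i)
    (I : Submodule S S) (hI : I.IsSubtractive) :
    (∃ A : Finset (Fin k), I = ⨆ a ∈ A, Si a) ∧ IsDirectSummand I :=
  subtractive_ideal_of_commutative_ideal_semisimple_general Si hd hsimple I
end

section
/- In the semiring B(3,1) = {0,1,2} with a⊕b = a+b if a+b<3 and otherwise the unique c ∈ {1,2} with c ≡ a+b (mod 2), and analogous multiplication, the subset I = {0,2} is a subtractive ideal which is not a direct summand of B(3,1). -/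
/-- The semiring `B(3,1)` on `{0,1,2}`: `a ⊕ b = a + b` if `a + b < 3`, else the
unique `c ∈ {1,2}` with `c ≡ a + b (mod 2)`; multiplication analogous. -/
def B31 : Type := Fin 3

instance : Zero B31 := ⟨(0 : Fin 3)⟩
instance : One B31 := ⟨(1 : Fin 3)⟩
instance : Add B31 :=
  ⟨fun a b : Fin 3 =>
    if h : a.val + b.val < 3 then ⟨a.val + b.val, h⟩
    else if (a.val + b.val) % 2 = 1 then ⟨1, by omega⟩ else ⟨2, by omega⟩⟩
instance : Mul B31 :=
  ⟨fun a b : Fin 3 =>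
    if h : a.val * b.val < 3 then ⟨a.val * b.val, h⟩
    else if (a.val * b.val) % 2 = 1 then ⟨1, by omega⟩ else ⟨2, by omega⟩⟩
instance : DecidableEq B31 := inferInstanceAs (DecidableEq (Fin 3))
instance : Fintype B31 := inferInstanceAs (Fintype (Fin 3))

instance : CommSemiring B31 where
  add_assoc := by decide
  zero_add := by decide
  add_zero := by decide
  add_comm := by decide
  mul_assoc := by decide
  one_mul := by decide
  mul_one := by decide
  mul_comm := by decide
  zero_mul := by decide
  mul_zero := by decide
  left_distrib := by decide
  right_distrib := by decide
  nsmul := nsmulRec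
/-- The ideal `I = {0, 2}` of `B(3,1)`. -/
def I31 : Submodule B31 B31 where
  carrier := {x | x = 0 ∨ x = (⟨2, by omega⟩ : Fin 3)}
  zero_mem' := Or.inl rfl
  add_mem' := by
    have h : ∀ a b : B31, (a = 0 ∨ a = (⟨2, by omega⟩ : Fin 3)) →
        (b = 0 ∨ b = (⟨2, by omega⟩ : Fin 3)) →
        (a + b = 0 ∨ a + b = (⟨2, by omega⟩ : Fin 3)) := by 
      letI : ∀ (a : B31) (b : Fin 3), Decidable (@Eq B31 a b) := fun a b => instDecidableEqB31 a b
      decide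
    intro a b ha hb; exact h a b ha hb
  smul_mem' := by
    have h : ∀ c x : B31, (x = 0 ∨ x = (⟨2, by omega⟩ : Fin 3)) →
        (c • x = 0 ∨ c • x = (⟨2, by omega⟩ : Fin 3)) := by 
      letI : ∀ (a : B31) (b : Fin 3), Decidable (@Eq B31 a b) := fun a b => instDecidableEqB31 a b
      decide
    intro c x hx; exact h c x hx

/-!
Subtractivity of `I = {0, 2}` is a finite check. For the other half, note that `2 + 1 = 1`
in `B(3,1)`: writing `1 = k + l` with `k ∈ I` and `l` in a would-be complement `J` forces
`l = 1`, so the ideal `J` is everything and meets `I` in `2 ≠ 0`, against uniqueness of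
decompositions.
-/

theorem IsDirectSumOf.eq_zero_of_mem_of_mem {S M : Type*} [Semiring S] [AddCommMonoid M]
    [Module S M] {N K L : Submodule S M} (h : IsDirectSumOf N K L) {x : M} (hK : x ∈ K)
    (hL : x ∈ L) : x = 0 :=
  (h.2.2.2 x 0 0 x hK K.zero_mem L.zero_mem hL (by rw [add_zero, zero_add])).1

theorem mem_I31 {x : B31} : x ∈ I31 ↔ x = 0 ∨ x = 2 := Iff.rfl

theorem I31_isSubtractive : I31.IsSubtractive := by
  intro m n n'
  simp only [mem_I31]
  revert m n n'
  decide

theorem eq_one_of_mem_I31_of_add_eq_one {k l : B31} (hk : k ∈ I31) (h : k + l = 1) : l = 1 := by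
  revert k l
  simp only [mem_I31]
  decide

/-- In `B(3,1)`, the subset `I = {0,2}` is a subtractive ideal which is not a
direct summand. -/
theorem B31_subtractive_ideal_not_summand :
    I31.IsSubtractive ∧ ¬ IsDirectSummand I31 := by
  refine ⟨I31_isSubtractive, ?_⟩
  rintro ⟨J, hsum⟩
  obtain ⟨k, hk, l, hl, hkl⟩ := hsum.2.2.1 1 Submodule.mem_top
  have hJ : J = ⊤ :=
    (Ideal.eq_top_iff_one J).2 (eq_one_of_mem_I31_of_add_eq_one hk hkl.symm ▸ hl)
  have h2 : (2 : B31) = 0 :=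
    hsum.eq_zero_of_mem_of_mem (mem_I31.2 (Or.inr rfl)) (hJ ▸ Submodule.mem_top)
  exact absurd h2 (by decide)
end

section
/- In S = M₂(ℝ₊), the left ideal N₁ = {[[a,a],[b,b]] : a,b ∈ ℝ₊} is a subtractive left ideal that is not a direct summand: if S = N₁ + K for a left ideal K, then K = S and N₁ ∩ K ≠ 0, so the sum is not direct. -/
open scoped NNReal

/-- The left ideal `N₁ = {[[a,a],[b,b]] : a, b ∈ ℝ₊}` of `M₂(ℝ₊)`. -/
def N1 : Submodule (Matrix (Fin 2) (Fin 2) ℝ≥0) (Matrix (Fin 2) (Fin 2) ℝ≥0) where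
  carrier := {A | A 0 0 = A 0 1 ∧ A 1 0 = A 1 1}
  zero_mem' := ⟨rfl, rfl⟩
  add_mem' := by
    rintro A B ⟨h1, h2⟩ ⟨h3, h4⟩
    exact ⟨by simp [Matrix.add_apply, h1, h3], by simp [Matrix.add_apply, h2, h4]⟩
  smul_mem' := by
    rintro c A ⟨h1, h2⟩
    have hcol : ∀ k : Fin 2, A k 0 = A k 1 := by
      intro k; fin_cases k <;> assumption
    constructor <;> simp only [smul_eq_mul, Matrix.mul_apply, hcol]

/-! Since ℝ₊ is zerosumfree, writing `1 = k + l` with `k ∈ N₁` forces the off-diagonal entries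
of `k`, and hence (its two columns being equal) all of `k`, to vanish. So `l = 1`, and any left
ideal `K` with `N₁ + K = S` contains `1`, i.e. `K = S`, which meets `N₁` nontrivially; this
rules out a direct complement. Subtractivity is entrywise cancellation in ℝ₊. -/

namespace IsDirectSumOf

variable {S : Type*} [Semiring S] {M : Type*} [AddCommMonoid M] [Module S M]
  {N K L : Submodule S M}

theorem sup_eq (h : IsDirectSumOf N K L) : K ⊔ L = N := by
  obtain ⟨hK, hL, hspan, -⟩ := h
  refine le_antisymm (sup_le hK hL) fun m hm => ?_
  obtain ⟨k, hk, l, hl, rfl⟩ := hspan m hm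
  exact Submodule.add_mem_sup hk hl

theorem inf_eq_bot (h : IsDirectSumOf N K L) : K ⊓ L = ⊥ := by
  refine (Submodule.eq_bot_iff _).2 fun x ⟨hxK, hxL⟩ => ?_
  exact (h.2.2.2 x 0 0 x hxK K.zero_mem L.zero_mem hxL (by rw [add_zero, zero_add])).1

end IsDirectSumOf

local notation "M₂" => Matrix (Fin 2) (Fin 2) ℝ≥0

theorem mem_N1_iff {A : M₂} : A ∈ N1 ↔ ∀ i, A i 0 = A i 1 := by
  rw [Fin.forall_fin_two]
  rfl

theorem N1_isSubtractive : N1.IsSubtractive := by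
  intro m n n' hn hn' h
  rw [mem_N1_iff] at hn hn' ⊢
  intro i
  apply add_right_cancel (b := n i 0)
  calc m i 0 + n i 0 = n' i 0 := congr_fun₂ h i 0
    _ = n' i 1 := hn' i
    _ = m i 1 + n i 1 := (congr_fun₂ h i 1).symm
    _ = m i 1 + n i 0 := by rw [hn i]

theorem N1_ne_bot : N1 ≠ ⊥ := by
  refine (Submodule.ne_bot_iff _).2 ⟨fun _ _ => 1, mem_N1_iff.2 fun _ => rfl, fun h => ?_⟩
  exact one_ne_zero (congr_fun₂ h 0 0)

theorem eq_zero_of_mem_N1_of_add_eq_one {k l : M₂} (hk : k ∈ N1)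
    (h : k + l = 1) : k = 0 := by
  have off_diag : ∀ i j, i ≠ j → k i j = 0 := fun i j hij =>
    (add_eq_zero.1 (by simpa [Matrix.one_apply_ne hij] using congr_fun₂ h i j)).1
  have h01 := off_diag 0 1 (by decide)
  have h10 := off_diag 1 0 (by decide)
  obtain ⟨h0, h1⟩ := hk
  ext i j
  fin_cases i <;> fin_cases j <;> simp [h0, ← h1, h01, h10]

theorem eq_top_of_N1_sup_eq_top {K : Submodule M₂ M₂} (hK : N1 ⊔ K = ⊤) : K = ⊤ := by
  obtain ⟨k, hk, l, hl, hkl⟩ := Submodule.mem_sup.1 (hK ▸ Submodule.mem_top (x := 1))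
  rw [eq_zero_of_mem_N1_of_add_eq_one hk hkl, zero_add] at hkl
  exact (Ideal.eq_top_iff_one K).2 (hkl ▸ hl)

theorem N1_inf_ne_bot_of_sup_eq_top {K : Submodule M₂ M₂} (hK : N1 ⊔ K = ⊤) : N1 ⊓ K ≠ ⊥ := by
  rw [eq_top_of_N1_sup_eq_top hK, inf_top_eq]
  exact N1_ne_bot

/-- In `S = M₂(ℝ₊)`, the left ideal `N₁` is subtractive but not a direct summand:
any left ideal `K` with `S = N₁ + K` satisfies `K = S` and `N₁ ∩ K ≠ 0`. -/
theorem N1_subtractive_not_summand :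
    N1.IsSubtractive ∧
      (∀ K : Submodule (Matrix (Fin 2) (Fin 2) ℝ≥0) (Matrix (Fin 2) (Fin 2) ℝ≥0),
        N1 ⊔ K = ⊤ → K = ⊤ ∧ N1 ⊓ K ≠ ⊥) ∧
      ¬ IsDirectSummand N1 := by
  refine ⟨N1_isSubtractive, fun K hK => ⟨eq_top_of_N1_sup_eq_top hK,
    N1_inf_ne_bot_of_sup_eq_top hK⟩, ?_⟩
  rintro ⟨K, hK⟩
  exact N1_inf_ne_bot_of_sup_eq_top hK.sup_eq hK.inf_eq_bot
end

section
/- A left S-semimodule N is a direct summand of a left S-semimodule M if and only if N = α(M) for some endomorphism α of M that is complemented in End(M), i.e., there exists an endomorphism α̃ with α + α̃ = id_M and α∘α̃ = 0 = α̃∘α. -/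
/-! A decomposition `M = N ⊕ N'` is the same as an isomorphism `N × N' ≃ M`; conjugating the
complementary projections `inl ∘ fst`, `inr ∘ snd` of the product by it gives `α` and `α̃`.
Conversely, `α + α̃ = 1` and `α α̃ = 0 = α̃ α` say that `![α, α̃]` is a complete family of orthogonal
idempotents, so `α` is the identity on `range α` and zero on `range α̃`; applying `α` and `α̃`
recovers both summands of `k + l`, and `m = α m + α̃ m` decomposes every `m`. -/

open LinearMap

section

variable {S : Type*} [Semiring S] {M : Type*} [AddCommMonoid M] [Module S M]

theorem Module.End.completeOrthogonalIdempotents_pair_iff {α β : Module.End S M} :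
    CompleteOrthogonalIdempotents ![α, β] ↔
      α + β = LinearMap.id ∧ α.comp β = 0 ∧ β.comp α = 0 := by
  rw [CompleteOrthogonalIdempotents.pair_iff'ₛ, ← and_rotate]
  rfl

theorem IsIdempotentElem.apply_add_eq_of_mem_range {α β : Module.End S M}
    (hα : IsIdempotentElem α) (hαβ : α * β = 0) {k l : M} (hk : k ∈ range α)
    (hl : l ∈ range β) : α (k + l) = k := by
  rw [map_add, hα.mem_range_iff.mp hk, range_le_ker_iff.mpr hαβ hl, add_zero]

theorem CompleteOrthogonalIdempotents.isDirectSumOf_top_range {α β : Module.End S M}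
    (h : CompleteOrthogonalIdempotents ![α, β]) : IsDirectSumOf ⊤ (range α) (range β) := by
  obtain ⟨hαβ, hβα, hsum⟩ := CompleteOrthogonalIdempotents.pair_iff'ₛ.mp h
  have hα := (IsIdempotentElem.of_mul_add hαβ hsum).1
  have hβ := (IsIdempotentElem.of_mul_add hβα ((add_comm β α).trans hsum)).1
  refine ⟨le_top, le_top, fun m _ => ⟨α m, mem_range_self α m, β m, mem_range_self β m, ?_⟩, ?_⟩
  · exact (congrArg (· m) hsum).symm
  · intro k k' l l' hk hk' hl hl' heq
    constructor
    · rw [← hα.apply_add_eq_of_mem_range hαβ hk hl, heq,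
        hα.apply_add_eq_of_mem_range hαβ hk' hl']
    · rw [← hβ.apply_add_eq_of_mem_range hβα hl hk, add_comm, heq, add_comm,
        hβ.apply_add_eq_of_mem_range hβα hl' hk']

theorem IsDirectSumOf.bijective_coprod_subtype {K L : Submodule S M}
    (h : IsDirectSumOf ⊤ K L) : Function.Bijective (K.subtype.coprod L.subtype) := by
  obtain ⟨-, -, hdecomp, huniq⟩ := h
  refine ⟨fun ⟨k, l⟩ ⟨k', l'⟩ heq => ?_, fun m => ?_⟩
  · obtain ⟨hk, hl⟩ := huniq k k' l l' k.2 k'.2 l.2 l'.2 heq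
    exact Prod.ext (Subtype.ext hk) (Subtype.ext hl)
  · obtain ⟨k, hk, l, hl, rfl⟩ := hdecomp m trivial
    exact ⟨(⟨k, hk⟩, ⟨l, hl⟩), rfl⟩

variable {A B : Type*} [AddCommMonoid A] [Module S A] [AddCommMonoid B] [Module S B]

theorem completeOrthogonalIdempotents_inl_comp_fst_inr_comp_snd :
    CompleteOrthogonalIdempotents
      ![(inl S A B ∘ₗ fst S A B : Module.End S (A × B)), inr S A B ∘ₗ snd S A B] := by
  rw [Module.End.completeOrthogonalIdempotents_pair_iff]
  refine ⟨?_, ?_, ?_⟩ <;> ext <;> simp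

theorem LinearEquiv.range_conjRingEquiv_inl_comp_fst (e : (A × B) ≃ₗ[S] M) :
    range (e.conjRingEquiv (inl S A B ∘ₗ fst S A B)) = range (e.toLinearMap ∘ₗ inl S A B) :=
  range_comp_of_range_eq_top (e.toLinearMap ∘ₗ inl S A B) <|
    range_eq_top_of_surjective (fst S A B ∘ₗ e.symm.toLinearMap)
      ((fst_surjective (R := S) (M := A) (M₂ := B)).comp e.symm.surjective)

theorem IsDirectSumOf.exists_completeOrthogonalIdempotents_range_eq {K L : Submodule S M}
    (h : IsDirectSumOf ⊤ K L) :
    ∃ α : Module.End S M, (∃ β, CompleteOrthogonalIdempotents ![α, β]) ∧ range α = K := by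
  let e := LinearEquiv.ofBijective _ h.bijective_coprod_subtype
  refine ⟨e.conjRingEquiv (inl S K L ∘ₗ fst S K L),
    ⟨e.conjRingEquiv (inr S K L ∘ₗ snd S K L), ?_⟩, ?_⟩
  · convert completeOrthogonalIdempotents_inl_comp_fst_inr_comp_snd.map
      e.conjRingEquiv.toRingHom using 1
    ext i
    fin_cases i <;> rfl
  · rw [e.range_conjRingEquiv_inl_comp_fst]
    exact (congrArg range (coprod_inl K.subtype L.subtype)).trans K.range_subtype

end

/-- `N` is a direct summand of `M` if and only if `N` is the image of an
endomorphism `α` of `M` that is complemented in `End(M)`: there is `α̃` with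
`α + α̃ = id` and `α ∘ α̃ = 0 = α̃ ∘ α`. -/
theorem isDirectSummand_iff_range_of_complemented_endomorphism
    {S : Type*} [Semiring S] {M : Type*} [AddCommMonoid M] [Module S M]
    (N : Submodule S M) :
    IsDirectSummand N ↔
      ∃ α : M →ₗ[S] M,
        (∃ αt : M →ₗ[S] M, α + αt = LinearMap.id ∧
          α.comp αt = 0 ∧ αt.comp α = 0) ∧
        LinearMap.range α = N := by
  simp_rw [← Module.End.completeOrthogonalIdempotents_pair_iff]
  constructor
  · rintro ⟨N', hN'⟩
    exact hN'.exists_completeOrthogonalIdempotents_range_eq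
  · rintro ⟨α, ⟨αt, h⟩, rfl⟩
    exact ⟨_, h.isDirectSumOf_top_range⟩
end
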